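/- With B = k[x_1,…,x_n,y_1,…,y_m,z] and A = A_{n,m} as above, B is the integral closure of A in its fraction field; in particular B is integral over A and Frac(A) = Frac(B). -/
import Mathlib


open MvPolynomial

/-- The variables of `B_{n,m} = k[x_1,…,x_n,y_1,…,y_m,z]`. -/
abbrev BonnetVars (n m : ℕ) := Fin n ⊕ Fin m ⊕ Unit

variable (k : Type*) [Field k] (n m : ℕ)

/-- The variable `x_i`. -/
noncomputable def Xv (i : Fin n) : MvPolynomial (BonnetVars n m) k := X (Sum.inl i)
/-- The variable `y_j`. -/
noncomputable def Yv (j : Fin m) : MvPolynomial (BonnetVars n m) k := X (Sum.inr (Sum.inl j))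
/-- The variable `z`. -/
noncomputable def Zv : MvPolynomial (BonnetVars n m) k := X (Sum.inr (Sum.inr ()))

/-- The generators of the subalgebra `A_{n,m}`: the `y_j`, `z`, the polynomials
`x_i^2 + x_i z` and `x_i^3 + x_i^2 z`, and the monomials `x_1^{i_1}⋯x_n^{i_n} y_j`
with all `i_k ≤ 1`. -/
noncomputable def AnmGens : Set (MvPolynomial (BonnetVars n m) k) :=
  Set.range (Yv k n m) ∪ {Zv k n m}
    ∪ Set.range (fun i => Xv k n m i ^ 2 + Xv k n m i * Zv k n m)
    ∪ Set.range (fun i => Xv k n m i ^ 3 + Xv k n m i ^ 2 * Zv k n m)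
    ∪ {p | ∃ (s : Finset (Fin n)) (j : Fin m), p = (∏ i ∈ s, Xv k n m i) * Yv k n m j}

/-- The subalgebra `A_{n,m}` of `B_{n,m}`. -/
noncomputable def Anm : Subalgebra k (MvPolynomial (BonnetVars n m) k) :=
  Algebra.adjoin k (AnmGens k n m)

namespace BnmAux

variable {k : Type*} [Field k] {n m : ℕ}

lemma hZmem : Zv k n m ∈ Anm k n m :=
  Algebra.subset_adjoin (Or.inl (Or.inl (Or.inl (Or.inr rfl))))

lemma hYmem (j : Fin m) : Yv k n m j ∈ Anm k n m :=
  Algebra.subset_adjoin (Or.inl (Or.inl (Or.inl (Or.inl ⟨j, rfl⟩))))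

lemma hTmem (i : Fin n) :
    Xv k n m i ^ 2 + Xv k n m i * Zv k n m ∈ Anm k n m :=
  Algebra.subset_adjoin (Or.inl (Or.inl (Or.inr ⟨i, rfl⟩)))

lemma hUmem (i : Fin n) :
    Xv k n m i ^ 3 + Xv k n m i ^ 2 * Zv k n m ∈ Anm k n m :=
  Algebra.subset_adjoin (Or.inl (Or.inr ⟨i, rfl⟩))

lemma T_ne_zero (i : Fin n) :
    Xv k n m i ^ 2 + Xv k n m i * Zv k n m ≠ 0 := by
  intro h
  have := congrArg (eval (Sum.elim (fun _ => (1:k)) (fun _ => 0))) h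
  simp [Xv, Zv] at this

lemma isIntegral_of_mem {b : MvPolynomial (BonnetVars n m) k}
    (hb : b ∈ Anm k n m) : IsIntegral (Anm k n m) b :=
  ⟨Polynomial.X - Polynomial.C ⟨b, hb⟩, Polynomial.monic_X_sub_C _, by simp [Subalgebra.algebraMap_eq]⟩

lemma isIntegral_X (v : BonnetVars n m) :
    IsIntegral (Anm k n m) (X v : MvPolynomial (BonnetVars n m) k) := by
  match v with
  | Sum.inr (Sum.inl j) => exact isIntegral_of_mem (hYmem j)
  | Sum.inr (Sum.inr ()) => exact isIntegral_of_mem hZmem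
  | Sum.inl i =>
    refine ⟨Polynomial.X ^ 2 + Polynomial.C (⟨Zv k n m, hZmem⟩ : Anm k n m) * Polynomial.X
      - Polynomial.C ⟨Xv k n m i ^ 2 + Xv k n m i * Zv k n m, hTmem i⟩, ?_, ?_⟩
    · monicity!
    · simp only [Polynomial.eval₂_sub, Polynomial.eval₂_add, Polynomial.eval₂_mul,
        Polynomial.eval₂_pow, Polynomial.eval₂_X, Polynomial.eval₂_C]
      show (X (Sum.inl i) : MvPolynomial (BonnetVars n m) k) ^ 2
        + Zv k n m * X (Sum.inl i) - (Xv k n m i ^ 2 + Xv k n m i * Zv k n m) = 0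
      rw [Xv]; ring

lemma isIntegral_all (b : MvPolynomial (BonnetVars n m) k) :
    IsIntegral (Anm k n m) b := by
  induction b using MvPolynomial.induction_on with
  | C a => exact isIntegral_of_mem (Subalgebra.algebraMap_mem _ a)
  | add p q hp hq => exact hp.add hq
  | mul_X p v hp => exact hp.mul (isIntegral_X v)

lemma frac_mem (b : MvPolynomial (BonnetVars n m) k) :
    ∃ a ∈ Anm k n m, ∃ c ∈ Anm k n m, c ≠ 0 ∧ b * c = a := by
  induction b using MvPolynomial.induction_on with
  | C a =>
    exact ⟨C a, Subalgebra.algebraMap_mem _ a, 1, one_mem _, one_ne_zero, mul_one _⟩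
  | add p q hp hq =>
    obtain ⟨a1, ha1, c1, hc1, hc1z, he1⟩ := hp
    obtain ⟨a2, ha2, c2, hc2, hc2z, he2⟩ := hq
    exact ⟨a1 * c2 + a2 * c1, add_mem (mul_mem ha1 hc2) (mul_mem ha2 hc1),
      c1 * c2, mul_mem hc1 hc2, mul_ne_zero hc1z hc2z, by rw [← he1, ← he2]; ring⟩
  | mul_X p v hp =>
    obtain ⟨a, ha, c, hc, hcz, he⟩ := hp
    match v with
    | Sum.inr (Sum.inl j) =>
      exact ⟨a * Yv k n m j, mul_mem ha (hYmem j), c, hc, hcz, by rw [← he, Yv]; ring⟩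
    | Sum.inr (Sum.inr ()) =>
      exact ⟨a * Zv k n m, mul_mem ha hZmem, c, hc, hcz, by rw [← he, Zv]; ring⟩
    | Sum.inl i =>
      refine ⟨a * (Xv k n m i ^ 3 + Xv k n m i ^ 2 * Zv k n m),
        mul_mem ha (hUmem i),
        c * (Xv k n m i ^ 2 + Xv k n m i * Zv k n m),
        mul_mem hc (hTmem i), mul_ne_zero hcz (T_ne_zero i), ?_⟩
      rw [← he, Xv]; ring

end BnmAux

/-- `B_{n,m}` is the integral closure of `A_{n,m}` in its fraction field:
`B_{n,m}` is integral over `A_{n,m}`, they have the same fraction field, and an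
element of the fraction field is integral over `A_{n,m}` iff it lies in
`B_{n,m}`. -/
theorem Bnm_is_integral_closure_of_Anm :
    (∀ b : MvPolynomial (BonnetVars n m) k,
      ∃ p : Polynomial (MvPolynomial (BonnetVars n m) k), p.Monic ∧
        (∀ i : ℕ, p.coeff i ∈ Anm k n m) ∧ Polynomial.eval b p = 0) ∧
    (∀ y : FractionRing (MvPolynomial (BonnetVars n m) k),
      ∃ a ∈ Anm k n m, ∃ b ∈ Anm k n m, b ≠ 0 ∧
        y * algebraMap (MvPolynomial (BonnetVars n m) k) _ b =
          algebraMap (MvPolynomial (BonnetVars n m) k) _ a) ∧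
    (∀ y : FractionRing (MvPolynomial (BonnetVars n m) k),
      (∃ p : Polynomial (MvPolynomial (BonnetVars n m) k), p.Monic ∧
          (∀ i : ℕ, p.coeff i ∈ Anm k n m) ∧
          Polynomial.eval₂
            (algebraMap (MvPolynomial (BonnetVars n m) k)
              (FractionRing (MvPolynomial (BonnetVars n m) k))) y p = 0) ↔
        y ∈ (algebraMap (MvPolynomial (BonnetVars n m) k)
          (FractionRing (MvPolynomial (BonnetVars n m) k))).range) := by
  classical
  set B := MvPolynomial (BonnetVars n m) k
  haveI hic : IsIntegrallyClosed B := UniqueFactorizationMonoid.instIsIntegrallyClosed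
  refine ⟨?_, ?_, ?_⟩
  · intro b
    obtain ⟨p, hmonic, heval⟩ := BnmAux.isIntegral_all b
    refine ⟨p.map (Anm k n m).subtype, hmonic.map _, ?_, ?_⟩
    · intro i
      rw [Polynomial.coeff_map]
      exact (p.coeff i).2
    · rw [Polynomial.eval_map]
      exact heval
  · intro y
    obtain ⟨⟨p, q⟩, hpq⟩ := IsLocalization.surj (nonZeroDivisors B) y
    obtain ⟨a1, ha1, c1, hc1, hc1z, he1⟩ := BnmAux.frac_mem p
    obtain ⟨a2, ha2, c2, hc2, hc2z, he2⟩ := BnmAux.frac_mem (q : B)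
    have hqz : (q : B) ≠ 0 := nonZeroDivisors.coe_ne_zero q
    refine ⟨a1 * c2, mul_mem ha1 hc2, c1 * a2, mul_mem hc1 ha2,
      mul_ne_zero hc1z (by rw [← he2]; exact mul_ne_zero hqz hc2z), ?_⟩
    have : c1 * a2 = (q : B) * (c1 * c2) := by rw [← he2]; ring
    rw [this, map_mul, ← mul_assoc, hpq, ← map_mul]
    congr 1
    rw [← he1]; ring
  · intro y
    constructor
    · rintro ⟨p, hmonic, -, heval⟩
      have hint : IsIntegral B y := ⟨p, hmonic, heval⟩
      obtain ⟨x, hx⟩ := IsIntegrallyClosed.isIntegral_iff.mp hint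
      exact ⟨x, hx⟩
    · rintro ⟨b, rfl⟩
      obtain ⟨p, hmonic, hcoeff, heval⟩ := (by
        obtain ⟨p, hm, he⟩ := BnmAux.isIntegral_all b
        exact ⟨p.map (Anm k n m).subtype, hm.map _,
          fun i => by rw [Polynomial.coeff_map]; exact (p.coeff i).2,
          by rw [Polynomial.eval_map]; exact he⟩ :
        ∃ p : Polynomial B, p.Monic ∧ (∀ i : ℕ, p.coeff i ∈ Anm k n m) ∧
          Polynomial.eval b p = 0)
      refine ⟨p, hmonic, hcoeff, ?_⟩
      rw [Polynomial.eval₂_hom, heval, map_zero]
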